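/- Let G and G' be directed graphs, regarded as extended quasi-metric spaces via the shortest directed path metric. If the magnitude cohomology rings MH^*_*(G) and MH^*_*(G') are isomorphic as bigraded associative unital rings, then G and G' are isomorphic as directed graphs. -/
import Mathlib


/-! Core definitions: magnitude (co)homology of generalised metric spaces. -/

open scoped ENNReal NNReal Classical
noncomputable section

/-- A generalised metric space (extended pseudo-quasi-metric space):
a set with a distance in `[0,∞]` satisfying `d x x = 0` and the triangle
inequality, but not necessarily symmetry or separation. -/
structure GMS (X : Type*) where
  d : X → X → ℝ≥0∞
  d_self : ∀ x, d x x = 0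
  d_triangle : ∀ x y z, d x z ≤ d x y + d y z

variable {X : Type*}

/-- An extended quasi-metric space: distinct points are at nonzero distance. -/
def GMS.Quasi (M : GMS X) : Prop := ∀ x y, M.d x y = 0 → x = y

/-- Consecutive entries of the tuple are distinct, i.e. it is a simplex. -/
def SepTuple {k : ℕ} (x : Fin (k + 1) → X) : Prop :=
  ∀ i : Fin k, x i.castSucc ≠ x i.succ

/-- The length of a tuple: the sum of consecutive distances. -/
def GMS.len (M : GMS X) {k : ℕ} (x : Fin (k + 1) → X) : ℝ≥0∞ :=
  ∑ i : Fin k, M.d (x i.castSucc) (x i.succ)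

/-- A `k`-simplex of length `ℓ` in the generalised metric space `M`. -/
structure MSimplex (M : GMS X) (k : ℕ) (ℓ : ℝ≥0) where
  pts : Fin (k + 1) → X
  sep : SepTuple pts
  len_eq : M.len pts = (ℓ : ℝ≥0∞)

/-- The magnitude chain group `MC_{k,ℓ}`: the free abelian group on the
`k`-simplices of length `ℓ`. -/
abbrev MC (M : GMS X) (k : ℕ) (ℓ : ℝ≥0) := MSimplex M k ℓ →₀ ℤ

/-- The magnitude cochain group `MC^k_ℓ = Hom(MC_{k,ℓ}, ℤ)`, identified with
the group of all `ℤ`-valued functions on `k`-simplices of length `ℓ`. -/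
abbrev MCo (M : GMS X) (k : ℕ) (ℓ : ℝ≥0) := MSimplex M k ℓ → ℤ

/-- Remove the `(j+1)`-st point (an inner point) from a tuple. -/
def faceTuple {k : ℕ} (x : Fin (k + 2) → X) (j : Fin k) : Fin (k + 1) → X :=
  x ∘ Fin.succAbove ⟨j.val + 1, by have := j.isLt; omega⟩

/-- The condition under which the inner face `∂_{j+1}` of a simplex is a simplex
of the same length: the removed point lies on a geodesic between its
neighbours (and, redundantly in quasi-metric spaces, the face is again a
simplex of the same length). -/
def GMS.FaceOK (M : GMS X) {k : ℕ} {ℓ : ℝ≥0} (s : MSimplex M (k + 1) ℓ) (j : Fin k) : Prop :=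
  M.d (s.pts ⟨j.val, by have := j.isLt; omega⟩) (s.pts ⟨j.val + 2, by have := j.isLt; omega⟩) =
      M.d (s.pts ⟨j.val, by have := j.isLt; omega⟩) (s.pts ⟨j.val + 1, by have := j.isLt; omega⟩) +
      M.d (s.pts ⟨j.val + 1, by have := j.isLt; omega⟩) (s.pts ⟨j.val + 2, by have := j.isLt; omega⟩)
    ∧ SepTuple (faceTuple s.pts j) ∧ M.len (faceTuple s.pts j) = (ℓ : ℝ≥0∞)

/-- The inner face `∂_{j+1}` of a simplex, when defined. -/
def GMS.face (M : GMS X) {k : ℕ} {ℓ : ℝ≥0} (s : MSimplex M (k + 1) ℓ) (j : Fin k)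
    (h : M.FaceOK s j) : MSimplex M k ℓ :=
  ⟨faceTuple s.pts j, h.2.1, h.2.2⟩

/-- The magnitude coboundary `∂^* : MC^k_ℓ → MC^{k+1}_ℓ`, dual to the
differential `∂ = -∂_1 + ∂_2 - ⋯ + (-1)^k ∂_k`. -/
def MCoDelta (M : GMS X) (k : ℕ) (ℓ : ℝ≥0) : MCo M k ℓ →ₗ[ℤ] MCo M (k + 1) ℓ where
  toFun φ := fun s => ∑ j : Fin k, (-1 : ℤ) ^ (j.val + 1) *
      (if h : M.FaceOK s j then φ (M.face s j h) else 0)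
  map_add' φ ψ := by
    funext s
    simp only [Pi.add_apply]
    rw [← Finset.sum_add_distrib]
    refine Finset.sum_congr rfl fun j _ => ?_
    split <;> ring
  map_smul' z φ := by
    funext s
    simp only [Pi.smul_apply, smul_eq_mul, RingHom.id_apply]
    rw [Finset.mul_sum]
    refine Finset.sum_congr rfl fun j _ => ?_
    split <;> ring

/-- Magnitude cocycles in bidegree `(k, ℓ)`. -/
def MCocycle (M : GMS X) (k : ℕ) (ℓ : ℝ≥0) : Submodule ℤ (MCo M k ℓ) :=
  LinearMap.ker (MCoDelta M k ℓ)

/-- Magnitude coboundaries in bidegree `(k, ℓ)` (zero in degree `0`). -/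
def MCobound (M : GMS X) : (k : ℕ) → (ℓ : ℝ≥0) → Submodule ℤ (MCo M k ℓ)
  | 0, _ => ⊥
  | (k + 1), ℓ => LinearMap.range (MCoDelta M k ℓ)

/-- The magnitude cohomology group `MH^k_ℓ(X)`: cocycles modulo coboundaries. -/
abbrev MagCohomology (M : GMS X) (k : ℕ) (ℓ : ℝ≥0) :=
  MCocycle M k ℓ ⧸ (MCobound M k ℓ).comap (MCocycle M k ℓ).subtype

/-- The cohomology class of a cochain (zero if it is not a cocycle). -/
def cohClass (M : GMS X) {k : ℕ} {ℓ : ℝ≥0} (φ : MCo M k ℓ) : MagCohomology M k ℓ :=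
  if h : φ ∈ MCocycle M k ℓ then Submodule.Quotient.mk ⟨φ, h⟩ else 0

/-- A representative cocycle of a magnitude cohomology class. -/
def MHout (M : GMS X) {k : ℕ} {ℓ : ℝ≥0} (α : MagCohomology M k ℓ) : MCo M k ℓ :=
  ((Submodule.Quotient.mk_surjective _) α).choose.val

/-- The first `j+1` points of a `(j+k)`-simplex. -/
def frontT (j k : ℕ) (x : Fin (j + k + 1) → X) : Fin (j + 1) → X :=
  fun i => x ⟨i.val, by have := i.isLt; omega⟩

/-- The last `k+1` points of a `(j+k)`-simplex. -/
def backT (j k : ℕ) (x : Fin (j + k + 1) → X) : Fin (k + 1) → X :=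
  fun i => x ⟨j + i.val, by have := i.isLt; omega⟩

lemma SepTuple.front {j k : ℕ} {x : Fin (j + k + 1) → X} (h : SepTuple x) :
    SepTuple (frontT j k x) := by
  intro i
  have hi := i.isLt
  exact h ⟨i.val, by omega⟩

lemma SepTuple.back {j k : ℕ} {x : Fin (j + k + 1) → X} (h : SepTuple x) :
    SepTuple (backT j k x) := by
  intro i
  have hi := i.isLt
  exact h ⟨j + i.val, by omega⟩

/-- The product of magnitude cochains:
`(φ·ψ)(x_0,…,x_{j+k}) = φ(x_0,…,x_j) · ψ(x_j,…,x_{j+k})`,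
where a cochain of length-degree `ℓ` vanishes on simplices of other lengths. -/
def MCup (M : GMS X) {j k : ℕ} {ℓ m : ℝ≥0} (φ : MCo M j ℓ) (ψ : MCo M k m) :
    MCo M (j + k) (ℓ + m) :=
  fun s =>
    if h : M.len (frontT j k s.pts) = (ℓ : ℝ≥0∞) ∧ M.len (backT j k s.pts) = (m : ℝ≥0∞) then
      φ ⟨frontT j k s.pts, s.sep.front, h.1⟩ * ψ ⟨backT j k s.pts, s.sep.back, h.2⟩
    else 0

/-- The unit cochain `u ∈ MC^0_0`, with `u(x_0) = 1`. -/
def MCoUnit (M : GMS X) : MCo M 0 0 := fun _ => 1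

/-- Transport of magnitude cohomology classes along equalities of bidegrees. -/
def MHcast (M : GMS X) {k k' : ℕ} {ℓ ℓ' : ℝ≥0} (hk : k = k') (hl : ℓ = ℓ')
    (α : MagCohomology M k ℓ) : MagCohomology M k' ℓ' := hk ▸ hl ▸ α

/-- Transport of magnitude cochains along equalities of bidegrees. -/
def MCoCast (M : GMS X) {k k' : ℕ} {ℓ ℓ' : ℝ≥0} (hk : k = k') (hl : ℓ = ℓ')
    (φ : MCo M k ℓ) : MCo M k' ℓ' := hk ▸ hl ▸ φ

/-- The product on magnitude cohomology induced by the product of cochains. -/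
def MHmul (M : GMS X) {j k : ℕ} {ℓ m : ℝ≥0} (α : MagCohomology M j ℓ)
    (β : MagCohomology M k m) : MagCohomology M (j + k) (ℓ + m) :=
  cohClass M (MCup M (MHout M α) (MHout M β))

/-- The unit of the magnitude cohomology ring. -/
def MHone (M : GMS X) : MagCohomology M 0 0 := cohClass M (MCoUnit M)

/-- Two points are adjacent: their distance is nonzero and finite, and no
third point lies strictly between them. -/
def GMS.Adjacent (M : GMS X) (x y : X) : Prop :=
  M.d x y ≠ 0 ∧ M.d x y ≠ ∞ ∧ ∀ a, M.d x y = M.d x a + M.d a y → a = x ∨ a = y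

/-- An isomorphism of magnitude cohomology rings: a family of additive
isomorphisms respecting both gradings, the product, and the unit. -/
def MHRingIso {Y : Type*} (M : GMS X) (M' : GMS Y) : Prop :=
  ∃ e : ∀ (k : ℕ) (ℓ : ℝ≥0), MagCohomology M k ℓ ≃+ MagCohomology M' k ℓ,
    (e 0 0 (MHone M) = MHone M') ∧
    ∀ (j k : ℕ) (ℓ m : ℝ≥0) (α : MagCohomology M j ℓ) (β : MagCohomology M k m),
      e (j + k) (ℓ + m) (MHmul M α β) = MHmul M' (e j ℓ α) (e k m β)


/-- The shortest directed path metric of a directed graph with edge relation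
`E`: the minimal number of edges in a directed path from `x` to `y`
(`∞` if there is no such path). -/
def digraphDist {V : Type*} (E : V → V → Prop) (x y : V) : ℝ≥0∞ :=
  ⨅ (n : ℕ) (_ : ∃ p : Fin (n + 1) → V, p 0 = x ∧ p (Fin.last n) = y ∧
      ∀ i : Fin n, E (p i.castSucc) (p i.succ)), (n : ℝ≥0∞)

/-! ### Auxiliary lemmas for the recovery theorem -/

set_option synthInstance.maxHeartbeats 1000000
set_option maxHeartbeats 1000000

section Aux

lemma MSimplex.pts_inj {M : GMS X} {k : ℕ} {ℓ : ℝ≥0} {s t : MSimplex M k ℓ}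
    (h : s.pts = t.pts) : s = t := by
  cases s; cases t; cases h; rfl

lemma apply_mk_eq {n : ℕ} (x : Fin (n + 1) → X) {m : ℕ} {h : m < n + 1} {i : Fin (n + 1)}
    (hm : m = i.val) : x ⟨m, h⟩ = x i := congrArg x (Fin.ext hm)

lemma len_zero' (M : GMS X) (x : Fin 1 → X) : M.len x = 0 := by
  simp [GMS.len]

lemma len_one' (M : GMS X) (x : Fin 2 → X) : M.len x = M.d (x 0) (x 1) := by
  simp [GMS.len]

lemma len_two' (M : GMS X) (x : Fin 3 → X) :
    M.len x = M.d (x 0) (x 1) + M.d (x 1) (x 2) := by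
  simp [GMS.len, Fin.sum_univ_two]

lemma mem_cocycle0 (M : GMS X) (ℓ : ℝ≥0) (φ : MCo M 0 ℓ) : φ ∈ MCocycle M 0 ℓ := by
  simp only [MCocycle, LinearMap.mem_ker]
  funext s
  simp [MCoDelta]

lemma isEmpty_simplex0 {M : GMS X} {ℓ : ℝ≥0} (h : ℓ ≠ 0) : IsEmpty (MSimplex M 0 ℓ) := by
  constructor
  intro s
  have hl := s.len_eq
  rw [len_zero'] at hl
  exact h (by exact_mod_cast hl.symm)

lemma isEmpty_simplex2 {M : GMS X} (hQ : ∀ x y : X, x ≠ y → 1 ≤ M.d x y)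
    {ℓ : ℝ≥0} (h : (ℓ : ℝ≥0∞) < 2) : IsEmpty (MSimplex M 2 ℓ) := by
  constructor
  intro s
  have h1 : 1 ≤ M.d (s.pts 0) (s.pts 1) := hQ _ _ (by simpa using s.sep 0)
  have h2 : 1 ≤ M.d (s.pts 1) (s.pts 2) := hQ _ _ (by simpa using s.sep 1)
  have hl := s.len_eq
  rw [len_two' M s.pts] at hl
  have h3 : (2 : ℝ≥0∞) ≤ (ℓ : ℝ≥0∞) := by
    rw [← hl]
    calc (2 : ℝ≥0∞) = 1 + 1 := by norm_num
    _ ≤ _ := add_le_add h1 h2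
  exact absurd h (not_lt.mpr h3)

lemma mem_cocycle1 {M : GMS X} (hQ : ∀ x y : X, x ≠ y → 1 ≤ M.d x y)
    {ℓ : ℝ≥0} (h : (ℓ : ℝ≥0∞) < 2) (φ : MCo M 1 ℓ) : φ ∈ MCocycle M 1 ℓ := by
  simp only [MCocycle, LinearMap.mem_ker]
  funext s
  exact ((isEmpty_simplex2 hQ h).false s).elim

lemma cobound0_eq_bot (M : GMS X) (ℓ : ℝ≥0) : MCobound M 0 ℓ = ⊥ := rfl

lemma cobound1_eq_bot (M : GMS X) {ℓ : ℝ≥0} (h : ℓ ≠ 0) : MCobound M 1 ℓ = ⊥ := by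
  rw [show MCobound M 1 ℓ = LinearMap.range (MCoDelta M 0 ℓ) from rfl, Submodule.eq_bot_iff]
  rintro φ ⟨ψ, rfl⟩
  have hψ : ψ = 0 := funext fun s => ((isEmpty_simplex0 h).false s).elim
  rw [hψ, map_zero]

lemma cohClass_eq_mk {M : GMS X} {k : ℕ} {ℓ : ℝ≥0} {φ : MCo M k ℓ}
    (h : φ ∈ MCocycle M k ℓ) :
    cohClass M φ = Submodule.Quotient.mk ⟨φ, h⟩ := dif_pos h

lemma MHout_mem {M : GMS X} {k : ℕ} {ℓ : ℝ≥0} (α : MagCohomology M k ℓ) :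
    MHout M α ∈ MCocycle M k ℓ :=
  (((Submodule.Quotient.mk_surjective _) α).choose).2

lemma cohClass_MHout {M : GMS X} {k : ℕ} {ℓ : ℝ≥0} (α : MagCohomology M k ℓ) :
    cohClass M (MHout M α) = α := by
  rw [cohClass_eq_mk (MHout_mem α)]
  exact ((Submodule.Quotient.mk_surjective _) α).choose_spec

lemma cohClass_inj {M : GMS X} {k : ℕ} {ℓ : ℝ≥0} (H2 : MCobound M k ℓ = ⊥)
    {φ ψ : MCo M k ℓ} (hφ : φ ∈ MCocycle M k ℓ) (hψ : ψ ∈ MCocycle M k ℓ)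
    (h : cohClass M φ = cohClass M ψ) : φ = ψ := by
  rw [cohClass_eq_mk hφ, cohClass_eq_mk hψ, Submodule.Quotient.eq, H2,
    Submodule.mem_comap, Submodule.mem_bot] at h
  have h' : φ - ψ = 0 := by simpa using h
  exact sub_eq_zero.mp h'

lemma MHout_cohClass {M : GMS X} {k : ℕ} {ℓ : ℝ≥0} (H2 : MCobound M k ℓ = ⊥)
    {φ : MCo M k ℓ} (hφ : φ ∈ MCocycle M k ℓ) : MHout M (cohClass M φ) = φ :=
  cohClass_inj H2 (MHout_mem _) hφ (cohClass_MHout _)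

lemma cohClass_zero (M : GMS X) (k : ℕ) (ℓ : ℝ≥0) : cohClass M (0 : MCo M k ℓ) = 0 := by
  rw [cohClass_eq_mk (zero_mem _)]
  rfl

lemma cohClass_add {M : GMS X} {k : ℕ} {ℓ : ℝ≥0} {φ ψ : MCo M k ℓ}
    (hφ : φ ∈ MCocycle M k ℓ) (hψ : ψ ∈ MCocycle M k ℓ) :
    cohClass M (φ + ψ) = cohClass M φ + cohClass M ψ := by
  rw [cohClass_eq_mk (add_mem hφ hψ), cohClass_eq_mk hφ, cohClass_eq_mk hψ]
  exact Submodule.Quotient.mk_add ((MCobound M k ℓ).comap (MCocycle M k ℓ).subtype) (x := ⟨φ, hφ⟩) (y := ⟨ψ, hψ⟩)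

lemma MHout_zero {M : GMS X} {k : ℕ} {ℓ : ℝ≥0} (H2 : MCobound M k ℓ = ⊥) :
    MHout M (0 : MagCohomology M k ℓ) = 0 := by
  have h := MHout_cohClass H2 (zero_mem (MCocycle M k ℓ))
  rwa [cohClass_zero] at h

lemma MHout_add {M : GMS X} {k : ℕ} {ℓ : ℝ≥0} (H2 : MCobound M k ℓ = ⊥)
    (α β : MagCohomology M k ℓ) :
    MHout M (α + β) = MHout M α + MHout M β :=
  cohClass_inj H2 (MHout_mem _) (add_mem (MHout_mem _) (MHout_mem _))
    (by rw [cohClass_MHout, cohClass_add (MHout_mem α) (MHout_mem β),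
          cohClass_MHout, cohClass_MHout])

lemma MHmul_cohClass {M : GMS X} {j k : ℕ} {ℓ m : ℝ≥0}
    (H2a : MCobound M j ℓ = ⊥) (H2b : MCobound M k m = ⊥)
    {φ : MCo M j ℓ} {ψ : MCo M k m}
    (hφ : φ ∈ MCocycle M j ℓ) (hψ : ψ ∈ MCocycle M k m) :
    MHmul M (cohClass M φ) (cohClass M ψ) = cohClass M (MCup M φ ψ) := by
  rw [MHmul, MHout_cohClass H2a hφ, MHout_cohClass H2b hψ]

end Aux

section Aux2

/-! ### Distance lemmas for digraph metrics -/

lemma digraphDist_one_le {V : Type*} (E : V → V → Prop) {x y : V} (h : x ≠ y) :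
    1 ≤ digraphDist E x y := by
  rw [digraphDist]
  refine le_iInf fun n => le_iInf fun hp => ?_
  match n, hp with
  | 0, ⟨p, h0, hl, _⟩ =>
      exact absurd (by rw [← h0, ← hl]; exact congrArg p (Fin.ext (by simp))) h
  | (n+1), _ => exact_mod_cast Nat.succ_le_succ (Nat.zero_le n)

lemma digraphDist_self_le {V : Type*} (E : V → V → Prop) (x : V) :
    digraphDist E x x ≤ 0 := by
  rw [digraphDist]
  exact iInf_le_of_le 0 (iInf_le_of_le ⟨fun _ => x, rfl, rfl, fun i => i.elim0⟩ (by norm_num))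

lemma digraphDist_le_one {V : Type*} {E : V → V → Prop} {x y : V} (h : E x y) :
    digraphDist E x y ≤ 1 := by
  rw [digraphDist]
  refine iInf_le_of_le 1 (iInf_le_of_le ?_ (by norm_num))
  refine ⟨fun i => if (i : ℕ) = 0 then x else y, by simp, by simp [Fin.last], fun i => ?_⟩
  have hi : i = 0 := Subsingleton.elim i 0
  subst hi
  simpa using h

lemma digraphDist_eq_one_iff {V : Type*} {E : V → V → Prop} (hE : Irreflexive E) (x y : V) :
    digraphDist E x y = 1 ↔ E x y := by
  constructor
  · intro h1
    have hxy : x ≠ y := by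
      intro he
      subst he
      have h0 := digraphDist_self_le E x
      rw [h1] at h0
      norm_num at h0
    by_contra hne
    have h2 : (2 : ℝ≥0∞) ≤ digraphDist E x y := by
      rw [digraphDist]
      refine le_iInf fun n => le_iInf fun hp => ?_
      match n, hp with
      | 0, ⟨p, h0, hl, _⟩ =>
          exact absurd (by rw [← h0, ← hl]; exact congrArg p (Fin.ext (by simp))) hxy
      | 1, ⟨p, h0, hl, he⟩ =>
          exfalso
          apply hne
          have h' := he 0
          rw [show (0 : Fin 1).castSucc = 0 from rfl, show (0 : Fin 1).succ = 1 from rfl,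
            h0, show (1 : Fin 2) = Fin.last 1 from rfl, hl] at h'
          exact h'
      | (n+2), _ => exact_mod_cast Nat.succ_le_succ (Nat.succ_le_succ (Nat.zero_le n))
    rw [h1] at h2
    norm_num at h2
  · intro hxy
    exact le_antisymm (digraphDist_le_one hxy)
      (digraphDist_one_le E (fun he => hE x (he ▸ hxy)))

/-! ### Degree (0, ℓ) cochains as functions on points -/

def Tl (M : GMS X) (ℓ : ℝ≥0) (g : X → ℤ) : MCo M 0 ℓ := fun s => g (s.pts 0)

def pt0 (M : GMS X) {ℓ : ℝ≥0} (hl : ℓ = 0) (v : X) : MSimplex M 0 ℓ :=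
  ⟨fun _ => v, fun i => i.elim0, by rw [len_zero', hl]; simp⟩

def Uc (M : GMS X) {ℓ : ℝ≥0} (hl : ℓ = 0) (α : MagCohomology M 0 ℓ) : X → ℤ :=
  fun v => MHout M α (pt0 M hl v)

lemma Uc_cohClass_Tl (M : GMS X) {ℓ : ℝ≥0} (hl : ℓ = 0) (g : X → ℤ) :
    Uc M hl (cohClass M (Tl M ℓ g)) = g := by
  funext v
  show MHout M (cohClass M (Tl M ℓ g)) (pt0 M hl v) = g v
  rw [MHout_cohClass (cobound0_eq_bot M ℓ) (mem_cocycle0 M ℓ _)]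
  rfl

lemma cohClass_Tl_Uc (M : GMS X) {ℓ : ℝ≥0} (hl : ℓ = 0) (α : MagCohomology M 0 ℓ) :
    cohClass M (Tl M ℓ (Uc M hl α)) = α := by
  have h : Tl M ℓ (Uc M hl α) = MHout M α := by
    funext s
    show MHout M α (pt0 M hl (s.pts 0)) = MHout M α s
    congr 1
    apply MSimplex.pts_inj
    funext i
    have hi : i = 0 := Fin.ext (by omega)
    rw [hi]
    rfl
  rw [h, cohClass_MHout]

lemma Uc_zero (M : GMS X) {ℓ : ℝ≥0} (hl : ℓ = 0) :
    Uc M hl (0 : MagCohomology M 0 ℓ) = 0 := by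
  funext v
  show MHout M (0 : MagCohomology M 0 ℓ) (pt0 M hl v) = 0
  rw [MHout_zero (cobound0_eq_bot M ℓ)]
  rfl

lemma MCup_Tl (M : GMS X) (g h : X → ℤ) :
    MCup M (Tl M 0 g) (Tl M 0 h) = Tl M (0 + 0) (g * h) := by
  funext s
  have c1 : M.len (frontT 0 0 s.pts) = ((0 : ℝ≥0) : ℝ≥0∞) := by rw [len_zero']; simp
  have c2 : M.len (backT 0 0 s.pts) = ((0 : ℝ≥0) : ℝ≥0∞) := by rw [len_zero']; simp
  show (if h' : _ ∧ _ then _ else 0) = _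
  rw [dif_pos ⟨c1, c2⟩]
  show g (frontT 0 0 s.pts 0) * h (backT 0 0 s.pts 0) = (g * h) (s.pts 0)
  rw [Pi.mul_apply]
  exact congr (congrArg (fun a => HMul.hMul (g a)) (by simp [frontT]))
    (congrArg h (by simp [backT]))

lemma Tc_mul (M : GMS X) (g h : X → ℤ) :
    MHmul M (cohClass M (Tl M 0 g)) (cohClass M (Tl M 0 h)) =
      cohClass M (Tl M (0 + 0) (g * h)) := by
  rw [MHmul_cohClass (cobound0_eq_bot M 0) (cobound0_eq_bot M 0)
    (mem_cocycle0 M 0 _) (mem_cocycle0 M 0 _), MCup_Tl]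

end Aux2

section Aux3

/-! ### Indicator functions and atoms in `ℤ^V` -/

def ind {V : Type*} (a : V) : V → ℤ := fun v => if v = a then 1 else 0

lemma ind_apply_self {V : Type*} (a : V) : ind a a = 1 := by simp [ind]

lemma ind_ne_zero {V : Type*} (a : V) : ind a ≠ 0 := fun h => by
  have h' := congrFun h a
  rw [ind_apply_self] at h'
  norm_num at h'

lemma ind_mul_self {V : Type*} (a : V) : ind a * ind a = ind a := by
  funext v
  by_cases h : v = a <;> simp [ind, h]

lemma ind_inj {V : Type*} {a b : V} (h : ind a = ind b) : a = b := by
  have h' := congrFun h a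
  rw [ind_apply_self] at h'
  by_contra hab
  simp [ind, hab] at h'

lemma idem_vals {V : Type*} {p : V → ℤ} (h : p * p = p) (v : V) : p v = 0 ∨ p v = 1 := by
  have h2 : p v * p v = p v := congrFun h v
  have h3 : p v * (p v - 1) = 0 := by rw [mul_sub, mul_one, h2, sub_self]
  rcases mul_eq_zero.mp h3 with h4 | h4
  · exact Or.inl h4
  · exact Or.inr (by linarith)

lemma exists_ind_image {V W : Type*} (Ef : (V → ℤ) → (W → ℤ)) (Eb : (W → ℤ) → (V → ℤ))
    (hfb : ∀ g, Eb (Ef g) = g) (hbf : ∀ h, Ef (Eb h) = h)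
    (hEfM : ∀ x y, Ef (x * y) = Ef x * Ef y) (hEbM : ∀ x y, Eb (x * y) = Eb x * Eb y)
    (hEf0 : Ef 0 = 0) (hEb0 : Eb 0 = 0)
    (a : V) : ∃ w : W, Ef (ind a) = ind w := by
  set p := Ef (ind a) with hp
  have hpp : p * p = p := by rw [hp, ← hEfM, ind_mul_self]
  have hpne : p ≠ 0 := fun h => ind_ne_zero a (by rw [← hfb (ind a), ← hp, h, hEb0])
  have hex : ∃ w, p w = 1 := by
    by_contra hc
    push_neg at hc
    exact hpne (funext fun w => (idem_vals hpp w).resolve_right (hc w))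
  obtain ⟨w, hw⟩ := hex
  refine ⟨w, funext fun w' => ?_⟩
  show p w' = ind w w'
  by_cases hww : w' = w
  · subst hww
    rw [hw, ind_apply_self]
  · rcases idem_vals hpp w' with h0 | h1
    · rw [h0]
      simp [ind, hww]
    · exfalso
      have hq : ind w' * p = ind w' := by
        funext u
        show ind w' u * p u = ind w' u
        by_cases hu : u = w'
        · subst hu
          rw [ind_apply_self, h1]
          norm_num
        · simp [ind, hu]
      have hr2 : Eb (ind w') = Eb (ind w') * ind a := by
        calc Eb (ind w') = Eb (ind w' * p) := by rw [hq]
        _ = Eb (ind w') * Eb p := hEbM _ _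
        _ = Eb (ind w') * ind a := by rw [hp, hfb]
      set r := Eb (ind w') with hr
      have hrr : r * r = r := by rw [hr, ← hEbM, ind_mul_self]
      have hrz : ∀ v, v ≠ a → r v = 0 := by
        intro v hv
        have h5 := congrFun hr2 v
        simp only [Pi.mul_apply, ind, if_neg hv, mul_zero] at h5
        exact h5
      have hrne : r ≠ 0 := fun h => ind_ne_zero w' (by rw [← hbf (ind w'), ← hr, h, hEf0])
      have hra : r a = 1 := by
        rcases idem_vals hrr a with h0 | h1'
        · exfalso
          apply hrne
          funext v
          by_cases hv : v = a
          · subst hv; exact h0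
          · exact hrz v hv
        · exact h1'
      have hreq : r = ind a := by
        funext v
        by_cases hv : v = a
        · subst hv; rw [hra, ind_apply_self]
        · rw [hrz v hv]; simp [ind, hv]
      have hfinal : ind w' = p := by
        rw [← hbf (ind w'), ← hr, hreq, hp]
      have h6 := congrFun hfinal w
      rw [hw] at h6
      have hww' : ¬ (w = w') := fun h => hww h.symm
      simp [ind, hww'] at h6

/-! ### Transfer of the degree-(0,0) ring structure -/

variable {Y : Type*} (M : GMS X) (M' : GMS Y)
variable (e00 : MagCohomology M 0 0 ≃+ MagCohomology M' 0 0)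

def EfD : (X → ℤ) → (Y → ℤ) :=
  fun g => Uc M' rfl (e00 (cohClass M (Tl M 0 g)))

lemma EfD_cohClass (g : X → ℤ) :
    e00 (cohClass M (Tl M 0 g)) = cohClass M' (Tl M' 0 (EfD M M' e00 g)) :=
  (cohClass_Tl_Uc M' rfl _).symm

def EbD : (Y → ℤ) → (X → ℤ) :=
  fun h => Uc M rfl (e00.symm (cohClass M' (Tl M' 0 h)))

lemma EbD_cohClass (h : Y → ℤ) :
    e00.symm (cohClass M' (Tl M' 0 h)) = cohClass M (Tl M 0 (EbD M M' e00 h)) :=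
  (cohClass_Tl_Uc M rfl _).symm

lemma EbD_EfD (g : X → ℤ) : EbD M M' e00 (EfD M M' e00 g) = g := by
  show Uc M rfl (e00.symm (cohClass M' (Tl M' 0 (Uc M' rfl (e00 (cohClass M (Tl M 0 g))))))) = g
  rw [cohClass_Tl_Uc M' rfl, AddEquiv.symm_apply_apply, Uc_cohClass_Tl M rfl]

lemma EfD_EbD (h : Y → ℤ) : EfD M M' e00 (EbD M M' e00 h) = h := by
  show Uc M' rfl (e00 (cohClass M (Tl M 0 (Uc M rfl (e00.symm (cohClass M' (Tl M' 0 h))))))) = h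
  rw [cohClass_Tl_Uc M rfl, AddEquiv.apply_symm_apply, Uc_cohClass_Tl M' rfl]

lemma EfD_zero : EfD M M' e00 0 = 0 := by
  show Uc M' rfl (e00 (cohClass M (Tl M 0 0))) = 0
  rw [show Tl M 0 (0 : X → ℤ) = 0 from rfl, cohClass_zero, AddEquiv.map_zero, Uc_zero]

lemma EbD_zero : EbD M M' e00 0 = 0 := by
  show Uc M rfl (e00.symm (cohClass M' (Tl M' 0 0))) = 0
  rw [show Tl M' 0 (0 : Y → ℤ) = 0 from rfl, cohClass_zero, AddEquiv.map_zero, Uc_zero]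

lemma EfD_one (hu : e00 (MHone M) = MHone M') : EfD M M' e00 1 = 1 := by
  show Uc M' rfl (e00 (cohClass M (Tl M 0 1))) = 1
  rw [show cohClass M (Tl M 0 (1 : X → ℤ)) = MHone M from rfl, hu,
    show MHone M' = cohClass M' (Tl M' 0 (1 : Y → ℤ)) from rfl, Uc_cohClass_Tl M' rfl]

lemma EfD_mul (e02 : MagCohomology M 0 ((0 : ℝ≥0) + 0) ≃+ MagCohomology M' 0 ((0 : ℝ≥0) + 0))
    (hu : e00 (MHone M) = MHone M')
    (hm : ∀ α β : MagCohomology M 0 0, e02 (MHmul M α β) = MHmul M' (e00 α) (e00 β))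
    (g h : X → ℤ) : EfD M M' e00 (g * h) = EfD M M' e00 g * EfD M M' e00 h := by
  have h00 : (0 : ℝ≥0) + 0 = 0 := add_zero 0
  have hstep : ∀ g' h' : X → ℤ,
      Uc M' h00 (e02 (cohClass M (Tl M (0 + 0) (g' * h')))) =
        EfD M M' e00 g' * EfD M M' e00 h' := by
    intro g' h'
    have h1 := hm (cohClass M (Tl M 0 g')) (cohClass M (Tl M 0 h'))
    rw [Tc_mul M g' h', EfD_cohClass M M' e00 g', EfD_cohClass M M' e00 h', Tc_mul M'] at h1
    have h2 := congrArg (Uc M' h00) h1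
    rwa [Uc_cohClass_Tl M' h00] at h2
  have t := hstep (g * h) 1
  rw [mul_one, EfD_one M M' e00 hu, mul_one] at t
  exact t.symm.trans (hstep g h)

end Aux3

section Aux4

/-! ### The edge-detection criterion -/

def dd (M : GMS X) (a : X) : MCo M 0 0 := fun s => if s.pts 0 = a then 1 else 0

lemma dd_eq_Tl (M : GMS X) (a : X) : dd M a = Tl M 0 (ind a) := rfl

lemma MCup_triple_apply (M : GMS X) (a b : X) (g : MCo M 1 1)
    (s : MSimplex M (0 + (1 + 0)) ((0 : ℝ≥0) + (1 + 0))) :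
    ∃ t : MSimplex M 1 1,
      MCup M (dd M a) (MCup M g (dd M b)) s =
        (if s.pts 0 = a then 1 else 0) * (g t * (if s.pts 1 = b then 1 else 0)) := by
  have hd : M.d (s.pts 0) (s.pts 1) = ((0 + (1 + 0) : ℝ≥0) : ℝ≥0∞) := by
    rw [← len_one' M s.pts]
    exact s.len_eq
  have c1 : M.len (frontT 0 (1 + 0) s.pts) = ((0 : ℝ≥0) : ℝ≥0∞) := by rw [len_zero']; simp
  have hb0 : backT 0 (1 + 0) s.pts 0 = s.pts 0 := by simp [backT]
  have hb1 : backT 0 (1 + 0) s.pts 1 = s.pts 1 := by simp [backT]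
  have c2 : M.len (backT 0 (1 + 0) s.pts) = (((1 : ℝ≥0) + 0) : ℝ≥0∞) := by
    rw [len_one', hb0, hb1, hd]
    norm_num
  have hf0 : frontT 1 0 (backT 0 (1 + 0) s.pts) 0 = s.pts 0 := by simp [frontT, backT]
  have hf1 : frontT 1 0 (backT 0 (1 + 0) s.pts) 1 = s.pts 1 := by simp [frontT, backT]
  have hbb : backT 1 0 (backT 0 (1 + 0) s.pts) 0 = s.pts 1 := by simp [backT]
  have c3 : M.len (frontT 1 0 (backT 0 (1 + 0) s.pts)) = ((1 : ℝ≥0) : ℝ≥0∞) := by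
    rw [len_one', hf0, hf1, hd]
    norm_num
  have c4 : M.len (backT 1 0 (backT 0 (1 + 0) s.pts)) = ((0 : ℝ≥0) : ℝ≥0∞) := by
    rw [len_zero']; simp
  refine ⟨⟨frontT 1 0 (backT 0 (1 + 0) s.pts), (s.sep.back).front, c3⟩, ?_⟩
  have inner : MCup M g (dd M b) ⟨backT 0 (1 + 0) s.pts, s.sep.back, c2⟩ =
      g ⟨frontT 1 0 (backT 0 (1 + 0) s.pts), (s.sep.back).front, c3⟩ *
        (if s.pts 1 = b then (1 : ℤ) else 0) := by
    show (if h' : _ ∧ _ then _ else 0) = _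
    rw [dif_pos ⟨c3, c4⟩]
    have hcond : (backT 1 0 (backT 0 (1 + 0) s.pts) 0 = b) = (s.pts 1 = b) := by rw [hbb]
    show g _ * (if backT 1 0 (backT 0 (1 + 0) s.pts) 0 = b then (1 : ℤ) else 0) = _
    rw [hbb]
  show (if h' : _ ∧ _ then _ else 0) = _
  rw [dif_pos ⟨c1, c2⟩]
  have houter : MCup M g (dd M b) ⟨backT 0 (1 + 0) s.pts, s.sep.back, c2⟩ =
      MCup M g (dd M b) ⟨backT 0 (1 + 0) s.pts, SepTuple.back s.sep, And.right ⟨c1, c2⟩⟩ := rfl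
  rw [← houter, inner]
  have hfr : frontT 0 (1 + 0) s.pts 0 = s.pts 0 := by simp [frontT]
  show (if frontT 0 (1 + 0) s.pts 0 = a then (1 : ℤ) else 0) * _ = _
  rw [hfr]

lemma crit_iff {M : GMS X} (hQ : ∀ x y : X, x ≠ y → 1 ≤ M.d x y) (a b : X) :
    (∃ γ : MagCohomology M 1 1,
        MHmul M (cohClass M (dd M a)) (MHmul M γ (cohClass M (dd M b))) ≠ 0) ↔
      M.d a b = 1 := by
  have hone : ((1 : ℝ≥0) + 0 : ℝ≥0) = 1 := by norm_num
  have hℓ2 : ((0 : ℝ≥0) + (1 + 0) : ℝ≥0) = 1 := by norm_num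
  have hlt1 : (((1 : ℝ≥0) + 0 : ℝ≥0) : ℝ≥0∞) < 2 := by rw [hone]; norm_num
  have hlt2 : (((0 : ℝ≥0) + (1 + 0) : ℝ≥0) : ℝ≥0∞) < 2 := by rw [hℓ2]; norm_num
  have htrip : ∀ γ : MagCohomology M 1 1,
      MHmul M (cohClass M (dd M a)) (MHmul M γ (cohClass M (dd M b))) =
        cohClass M (MCup M (dd M a) (MCup M (MHout M γ) (dd M b))) := by
    intro γ
    rw [MHmul, MHmul,
      MHout_cohClass (cobound0_eq_bot M 0) (mem_cocycle0 M 0 _),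
      MHout_cohClass (cobound0_eq_bot M 0) (mem_cocycle0 M 0 _),
      MHout_cohClass (cobound1_eq_bot M (by rw [hone]; norm_num)) (mem_cocycle1 hQ hlt1 _)]
  constructor
  · rintro ⟨γ, hγ⟩
    rw [htrip γ] at hγ
    have hne : MCup M (dd M a) (MCup M (MHout M γ) (dd M b)) ≠ 0 :=
      fun h0 => hγ (by rw [h0, cohClass_zero])
    have hs : ∃ s, MCup M (dd M a) (MCup M (MHout M γ) (dd M b)) s ≠ 0 := by
      by_contra hc
      push_neg at hc
      exact hne (funext hc)
    obtain ⟨s, hsne⟩ := hs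
    obtain ⟨t, ht⟩ := MCup_triple_apply M a b (MHout M γ) s
    rw [ht] at hsne
    have ha : s.pts 0 = a := by
      by_contra hcon
      rw [if_neg hcon, zero_mul] at hsne
      exact hsne rfl
    have hbp : s.pts 1 = b := by
      by_contra hcon
      rw [if_neg hcon, mul_zero, mul_zero] at hsne
      exact hsne rfl
    have hd : M.d (s.pts 0) (s.pts 1) = ((0 + (1 + 0) : ℝ≥0) : ℝ≥0∞) := by
      rw [← len_one' M s.pts]
      exact s.len_eq
    rw [ha, hbp] at hd
    rw [hd, hℓ2]
    exact ENNReal.coe_one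
  · intro hd
    have hab : a ≠ b := by
      intro he
      rw [he, M.d_self] at hd
      exact absurd hd (by norm_num)
    have hsep : SepTuple (fun i : Fin (0 + (1 + 0) + 1) => if (i : ℕ) = 0 then a else b) := by
      intro i
      have hi : (i : ℕ) = 0 := by have := i.isLt; omega
      simpa [Fin.coe_castSucc, Fin.val_succ, hi] using hab
    have hlen : M.len (fun i : Fin (0 + (1 + 0) + 1) => if (i : ℕ) = 0 then a else b) =
        ((0 + (1 + 0) : ℝ≥0) : ℝ≥0∞) := by
      rw [len_one']
      simp only [Fin.isValue, Fin.val_zero, Fin.val_one, if_true, one_ne_zero, if_false,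
        reduceIte]
      rw [hd, hℓ2, ENNReal.coe_one]
    refine ⟨cohClass M (fun _ => (1 : ℤ)), ?_⟩
    rw [htrip _]
    have hg : MHout M (cohClass M (fun _ => (1 : ℤ)) : MagCohomology M 1 1) =
        fun _ => (1 : ℤ) :=
      MHout_cohClass (cobound1_eq_bot M one_ne_zero) (mem_cocycle1 hQ (by norm_num) _)
    intro h0
    have hz := cohClass_inj (cobound1_eq_bot M (by rw [hℓ2]; norm_num))
      (mem_cocycle1 hQ hlt2 _) (zero_mem _) (h0.trans (cohClass_zero M _ _).symm)
    obtain ⟨t, ht⟩ := MCup_triple_apply M a b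
      (MHout M (cohClass M (fun _ => (1 : ℤ)) : MagCohomology M 1 1)) ⟨_, hsep, hlen⟩
    rw [hz, hg] at ht
    simp at ht

end Aux4

/-- A directed graph is determined up to isomorphism by the magnitude
cohomology ring of the associated extended quasi-metric space (with the
shortest directed path metric). -/
theorem digraph_recovery {V W : Type*} (E : V → V → Prop) (F : W → W → Prop)
    (hE : Irreflexive E) (hF : Irreflexive F)
    (M : GMS V) (M' : GMS W)
    (hM : ∀ x y, M.d x y = digraphDist E x y)
    (hM' : ∀ x y, M'.d x y = digraphDist F x y)
    (hiso : MHRingIso M M') :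
    ∃ f : V → W, Function.Bijective f ∧ ∀ a b : V, (F (f a) (f b) ↔ E a b) := by
  obtain ⟨e, hunit, hmul⟩ := hiso
  have hQ : ∀ x y : V, x ≠ y → 1 ≤ M.d x y := fun x y h => by
    rw [hM]; exact digraphDist_one_le E h
  have hQ' : ∀ x y : W, x ≠ y → 1 ≤ M'.d x y := fun x y h => by
    rw [hM']; exact digraphDist_one_le F h
  have hm00 : ∀ α β : MagCohomology M 0 0,
      e (0 + 0) ((0 : ℝ≥0) + 0) (MHmul M α β) = MHmul M' (e 0 0 α) (e 0 0 β) :=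
    fun α β => hmul 0 0 0 0 α β
  have hfb := EbD_EfD M M' (e 0 0)
  have hbf := EfD_EbD M M' (e 0 0)
  have hEfM := EfD_mul M M' (e 0 0) (e (0 + 0) ((0 : ℝ≥0) + 0)) hunit hm00
  have hEf0 := EfD_zero M M' (e 0 0)
  have hEb0 := EbD_zero M M' (e 0 0)
  have hEfInj : Function.Injective (EfD M M' (e 0 0)) := fun x y hxy => by
    rw [← hfb x, hxy, hfb]
  have hEbM : ∀ x y, EbD M M' (e 0 0) (x * y) = EbD M M' (e 0 0) x * EbD M M' (e 0 0) y := by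
    intro x y
    apply hEfInj
    rw [hbf, hEfM, hbf, hbf]
  have hfa : ∀ a : V, ∃ w : W, EfD M M' (e 0 0) (ind a) = ind w :=
    exists_ind_image _ _ hfb hbf hEfM hEbM hEf0 hEb0
  choose f hf using hfa
  have hba : ∀ w : W, ∃ a : V, EbD M M' (e 0 0) (ind w) = ind a :=
    exists_ind_image _ _ hbf hfb hEbM hEfM hEb0 hEf0
  choose g0 hg0 using hba
  have hgf : ∀ a, g0 (f a) = a := by
    intro a
    apply ind_inj
    rw [← hg0 (f a), ← hf a, hfb]
  have hfg : ∀ w, f (g0 w) = w := by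
    intro w
    apply ind_inj
    rw [← hf (g0 w), ← hg0 w, hbf]
  refine ⟨f, Function.bijective_iff_has_inverse.mpr ⟨g0, hgf, hfg⟩, ?_⟩
  have hdd : ∀ a : V, e 0 0 (cohClass M (dd M a)) = cohClass M' (dd M' (f a)) := by
    intro a
    rw [dd_eq_Tl, dd_eq_Tl, EfD_cohClass M M' (e 0 0) (ind a), hf a]
  intro a b
  rw [← digraphDist_eq_one_iff hF (f a) (f b), ← digraphDist_eq_one_iff hE a b,
    ← hM, ← hM', ← crit_iff hQ a b, ← crit_iff hQ' (f a) (f b)]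
  constructor
  · rintro ⟨γ', hγ'⟩
    refine ⟨(e 1 1).symm γ', fun h0 => hγ' ?_⟩
    have hh := hmul 0 (1 + 0) 0 ((1 : ℝ≥0) + 0) (cohClass M (dd M a))
      (MHmul M ((e 1 1).symm γ') (cohClass M (dd M b)))
    rw [hmul 1 0 1 0 ((e 1 1).symm γ') (cohClass M (dd M b)), hdd a, hdd b,
      AddEquiv.apply_symm_apply] at hh
    rw [h0, AddEquiv.map_zero] at hh
    exact hh.symm
  · rintro ⟨γ, hγ⟩
    refine ⟨e 1 1 γ, fun h0 => hγ ?_⟩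
    have hh := hmul 0 (1 + 0) 0 ((1 : ℝ≥0) + 0) (cohClass M (dd M a))
      (MHmul M γ (cohClass M (dd M b)))
    rw [hmul 1 0 1 0 γ (cohClass M (dd M b)), hdd a, hdd b] at hh
    apply (e (0 + (1 + 0)) ((0 : ℝ≥0) + ((1 : ℝ≥0) + 0))).injective
    rw [AddEquiv.map_zero, hh, h0]


end
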